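/- Let f : ℝ → [0,1] be measurable and let f̄(x) = (1/√(2πσ²)) ∫_ℝ f(t) exp(−(x−t)²/(2σ²)) dt be its Gaussian smoothing with variance σ² > 0. Then for all x, the second derivative of f̄ satisfies |f̄''(x)| ≤ 2/σ². -/

import Mathlib

open MeasureTheory Real Filter

/-!
Write `k y = exp (-b y²)` with `b = 1 / (2σ²)` and `Z = ∫ k = √(2πσ²)`, so that the smoothing is
`x ↦ Z⁻¹ ∫ f t k (x - t) dt`. Derivatives of `k` are polynomials times `k`, and such a function
evaluated at `u + s` with `|s| ≤ 1` is dominated by an integrable `C (1 + u²) exp (-b u² / 2)`;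
this justifies differentiating twice under the integral sign. Since `|f| ≤ 1`,
`|f̄''(x)| ≤ Z⁻¹ ∫ |k''| ≤ Z⁻¹ ∫ 2b (1 + 2b y²) k(y) dy = 4b = 2 / σ²`, where
`∫ y² k = Z / (2b)` because the derivative `(1 - 2b y²) k` of `y k(y)` integrates to zero.
-/

section ConvolutionWithBounded

variable {f g g' G : ℝ → ℝ} {C : ℝ}

lemma integrable_mul_comp_sub (hf : AEStronglyMeasurable f) (hfC : ∀ t, |f t| ≤ C)
    (hg : Integrable g) (x : ℝ) : Integrable fun t => f t * g (x - t) :=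
  (hg.comp_sub_left x).bdd_mul hf (Eventually.of_forall hfC)

lemma abs_integral_mul_comp_sub_le (hfC : ∀ t, |f t| ≤ C) (hg : Integrable g) (x : ℝ) :
    |∫ t, f t * g (x - t)| ≤ C * ∫ u, |g u| := by
  calc |∫ t, f t * g (x - t)| ≤ ∫ t, C * |g (x - t)| :=
        norm_integral_le_of_norm_le (f := fun t => f t * g (x - t))
          ((hg.abs.comp_sub_left x).const_mul C)
          (Eventually.of_forall fun t => by
            rw [norm_mul]; exact mul_le_mul_of_nonneg_right (hfC t) (abs_nonneg _))
    _ = C * ∫ u, |g u| := by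
        rw [integral_const_mul, integral_sub_left_eq_self (fun u => |g u|)]

lemma hasDerivAt_integral_mul_comp_sub (hf : AEStronglyMeasurable f) (hfC : ∀ t, |f t| ≤ C)
    (hg : ∀ y, HasDerivAt g (g' y) y) (hg_int : Integrable g) (hg' : Continuous g')
    (hG : Integrable G) (hdom : ∀ u s, |s| ≤ 1 → |g' (u + s)| ≤ G u) (x₀ : ℝ) :
    HasDerivAt (fun x => ∫ t, f t * g (x - t)) (∫ t, f t * g' (x₀ - t)) x₀ := by
  have hg_cont : Continuous g := continuous_iff_continuousAt.2 fun y => (hg y).continuousAt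
  refine (hasDerivAt_integral_of_dominated_loc_of_deriv_le (F := fun x t => f t * g (x - t))
    (F' := fun x t => f t * g' (x - t)) (bound := fun t => C * G (x₀ - t))
    (Metric.ball_mem_nhds x₀ one_pos)
    (Eventually.of_forall fun x =>
      hf.mul (by fun_prop : Continuous fun t => g (x - t)).aestronglyMeasurable)
    (integrable_mul_comp_sub hf hfC hg_int x₀)
    (hf.mul (by fun_prop : Continuous fun t => g' (x₀ - t)).aestronglyMeasurable) ?_
    ((hG.comp_sub_left x₀).const_mul C) ?_).2
  · refine Eventually.of_forall fun t x hx => ?_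
    have hx : |x - x₀| ≤ 1 := (Real.dist_eq x x₀ ▸ Metric.mem_ball.1 hx).le
    calc ‖f t * g' (x - t)‖ = |f t| * |g' ((x₀ - t) + (x - x₀))| := by
          rw [norm_mul, Real.norm_eq_abs, Real.norm_eq_abs, sub_add_sub_cancel']
      _ ≤ C * G (x₀ - t) :=
          mul_le_mul (hfC t) (hdom _ _ hx) (abs_nonneg _) ((abs_nonneg _).trans (hfC t))
  · refine Eventually.of_forall fun t x _ => ?_
    simpa using ((hg (x - t)).comp x ((hasDerivAt_id x).sub_const t)).const_mul (f t)

end ConvolutionWithBounded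

section GaussianKernel

variable {b : ℝ}

lemma hasDerivAt_exp_neg_mul_sq (b y : ℝ) :
    HasDerivAt (fun y => exp (-b * y ^ 2)) (-2 * b * (y * exp (-b * y ^ 2))) y := by
  convert ((hasDerivAt_pow 2 y).const_mul (-b)).exp using 1
  push_cast
  ring

lemma hasDerivAt_mul_exp_neg_mul_sq (b y : ℝ) :
    HasDerivAt (fun y => y * exp (-b * y ^ 2)) ((1 - 2 * b * y ^ 2) * exp (-b * y ^ 2)) y := by
  refine ((hasDerivAt_id' (x := y)).fun_mul (hasDerivAt_exp_neg_mul_sq b y)).congr_deriv ?_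
  ring

lemma integrable_sq_mul_exp_neg_mul_sq (hb : 0 < b) :
    Integrable fun y : ℝ => y ^ 2 * exp (-b * y ^ 2) := by
  simpa only [rpow_two] using integrable_rpow_mul_exp_neg_mul_sq hb (by norm_num : (-1 : ℝ) < 2)

lemma integrable_one_add_sq_mul_exp_neg_mul_sq (hb : 0 < b) :
    Integrable fun y : ℝ => (1 + y ^ 2) * exp (-b * y ^ 2) := by
  simp_rw [add_mul, one_mul]
  exact (integrable_exp_neg_mul_sq hb).add (integrable_sq_mul_exp_neg_mul_sq hb)

lemma integral_sq_mul_exp_neg_mul_sq (hb : 0 < b) :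
    ∫ y, y ^ 2 * exp (-b * y ^ 2) = (2 * b)⁻¹ * ∫ y, exp (-b * y ^ 2) := by
  have hsq := integrable_sq_mul_exp_neg_mul_sq hb
  have hexp := integrable_exp_neg_mul_sq hb
  have h := integral_eq_zero_of_hasDerivAt_of_integrable
    (f' := fun y => exp (-b * y ^ 2) - 2 * b * (y ^ 2 * exp (-b * y ^ 2)))
    (fun y => (hasDerivAt_mul_exp_neg_mul_sq b y).congr_deriv (by ring))
    (hexp.sub (hsq.const_mul (2 * b))) (integrable_mul_exp_neg_mul_sq hb)
  rw [integral_sub hexp (hsq.const_mul _), integral_const_mul] at h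
  rw [eq_inv_mul_iff_mul_eq₀ (by positivity)]
  linarith

lemma exp_neg_mul_sq_add_le (hb : 0 ≤ b) (u : ℝ) {s : ℝ} (hs : |s| ≤ 1) :
    exp (-b * (u + s) ^ 2) ≤ exp b * exp (-(b / 2) * u ^ 2) := by
  rw [← exp_add, exp_le_exp]
  have : u ^ 2 / 2 - 1 ≤ (u + s) ^ 2 := by
    nlinarith [sq_nonneg (u + 2 * s), sq_abs s, abs_nonneg s]
  nlinarith

lemma one_add_sq_mul_exp_neg_mul_sq_add_le (hb : 0 ≤ b) (u : ℝ) {s : ℝ} (hs : |s| ≤ 1) :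
    (1 + (u + s) ^ 2) * exp (-b * (u + s) ^ 2)
      ≤ 3 * exp b * ((1 + u ^ 2) * exp (-(b / 2) * u ^ 2)) := by
  have hpoly : 1 + (u + s) ^ 2 ≤ 3 * (1 + u ^ 2) := by
    nlinarith [sq_nonneg (u - s), sq_abs s, abs_nonneg s]
  calc (1 + (u + s) ^ 2) * exp (-b * (u + s) ^ 2)
      ≤ 3 * (1 + u ^ 2) * (exp b * exp (-(b / 2) * u ^ 2)) :=
        mul_le_mul hpoly (exp_neg_mul_sq_add_le hb u hs) (exp_pos _).le (by positivity)
    _ = 3 * exp b * ((1 + u ^ 2) * exp (-(b / 2) * u ^ 2)) := by ring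

lemma abs_deriv_exp_neg_mul_sq_le (hb : 0 ≤ b) (y : ℝ) :
    |-2 * b * (y * exp (-b * y ^ 2))| ≤ 2 * b * ((1 + y ^ 2) * exp (-b * y ^ 2)) := by
  rw [abs_mul, abs_of_nonpos (by linarith), abs_mul, abs_of_pos (exp_pos _)]
  have : |y| ≤ 1 + y ^ 2 := by nlinarith [sq_abs y, sq_nonneg (|y| - 1)]
  have := exp_pos (-b * y ^ 2)
  nlinarith [mul_nonneg hb this.le]

lemma abs_deriv_two_exp_neg_mul_sq_le (hb : 0 ≤ b) (y : ℝ) :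
    |-2 * b * ((1 - 2 * b * y ^ 2) * exp (-b * y ^ 2))|
      ≤ 2 * b * (exp (-b * y ^ 2) + 2 * b * (y ^ 2 * exp (-b * y ^ 2))) := by
  rw [abs_mul, abs_of_nonpos (by linarith), abs_mul, abs_of_pos (exp_pos _)]
  have : |1 - 2 * b * y ^ 2| ≤ 1 + 2 * b * y ^ 2 :=
    (abs_sub _ _).trans_eq (by rw [abs_one, abs_of_nonneg (by positivity)])
  have := exp_pos (-b * y ^ 2)
  nlinarith [mul_nonneg hb this.le]

lemma abs_deriv_two_exp_neg_mul_sq_le_one_add_sq (hb : 0 ≤ b) (y : ℝ) :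
    |-2 * b * ((1 - 2 * b * y ^ 2) * exp (-b * y ^ 2))|
      ≤ 2 * b * (1 + 2 * b) * ((1 + y ^ 2) * exp (-b * y ^ 2)) := by
  refine (abs_deriv_two_exp_neg_mul_sq_le hb y).trans ?_
  have := exp_pos (-b * y ^ 2)
  nlinarith [mul_nonneg (mul_nonneg hb this.le)
    (add_nonneg (sq_nonneg y) (by positivity : 0 ≤ 2 * b))]

lemma integrable_deriv_two_exp_neg_mul_sq_bound (hb : 0 < b) :
    Integrable fun y => 2 * b * (exp (-b * y ^ 2) + 2 * b * (y ^ 2 * exp (-b * y ^ 2))) :=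
  ((integrable_exp_neg_mul_sq hb).add
    ((integrable_sq_mul_exp_neg_mul_sq hb).const_mul _)).const_mul _

lemma integrable_deriv_two_exp_neg_mul_sq (hb : 0 < b) :
    Integrable fun y => -2 * b * ((1 - 2 * b * y ^ 2) * exp (-b * y ^ 2)) :=
  (integrable_deriv_two_exp_neg_mul_sq_bound hb).mono'
    (by fun_prop : Continuous _).aestronglyMeasurable
    (ae_of_all _ (abs_deriv_two_exp_neg_mul_sq_le hb.le))

lemma integral_abs_deriv_two_exp_neg_mul_sq_le (hb : 0 < b) :
    ∫ y, |-2 * b * ((1 - 2 * b * y ^ 2) * exp (-b * y ^ 2))|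
      ≤ 4 * b * ∫ y, exp (-b * y ^ 2) := by
  refine (integral_mono (integrable_deriv_two_exp_neg_mul_sq hb).abs
    (integrable_deriv_two_exp_neg_mul_sq_bound hb)
    (abs_deriv_two_exp_neg_mul_sq_le hb.le)).trans_eq ?_
  rw [integral_const_mul, integral_add (integrable_exp_neg_mul_sq hb)
    ((integrable_sq_mul_exp_neg_mul_sq hb).const_mul _), integral_const_mul,
    integral_sq_mul_exp_neg_mul_sq hb]
  field_simp
  ring

end GaussianKernel

lemma hasDerivAt_integral_mul_comp_sub_of_abs_le {f g g' : ℝ → ℝ} {A b C : ℝ}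
    (hf : AEStronglyMeasurable f) (hfC : ∀ t, |f t| ≤ C)
    (hg : ∀ y, HasDerivAt g (g' y) y) (hg_int : Integrable g) (hg' : Continuous g')
    (hb : 0 < b) (hA : 0 ≤ A)
    (hg'_le : ∀ y, |g' y| ≤ A * ((1 + y ^ 2) * exp (-b * y ^ 2))) (x : ℝ) :
    HasDerivAt (fun x => ∫ t, f t * g (x - t)) (∫ t, f t * g' (x - t)) x :=
  hasDerivAt_integral_mul_comp_sub hf hfC hg hg_int hg'
    ((integrable_one_add_sq_mul_exp_neg_mul_sq (half_pos hb)).const_mul (A * (3 * exp b)))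
    (fun u s hs => (hg'_le (u + s)).trans <| by
      rw [mul_assoc]
      exact mul_le_mul_of_nonneg_left
        (one_add_sq_mul_exp_neg_mul_sq_add_le hb.le u hs) hA) x

lemma iteratedDeriv_two_eq_of_hasDerivAt {F F' F'' : ℝ → ℝ} (hF : ∀ x, HasDerivAt F (F' x) x)
    (hF' : ∀ x, HasDerivAt F' (F'' x) x) (x : ℝ) : iteratedDeriv 2 F x = F'' x := by
  rw [iteratedDeriv_succ, iteratedDeriv_one, funext fun y => (hF y).deriv, (hF' x).deriv]

theorem gaussian_smoothing_second_deriv_bound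
    (σ : ℝ) (hσ : 0 < σ) (f : ℝ → ℝ) (hf : Measurable f)
    (hf01 : ∀ t, f t ∈ Set.Icc (0 : ℝ) 1) :
    ∀ x : ℝ,
      |iteratedDeriv 2
        (fun x : ℝ => (1 / Real.sqrt (2 * π * σ ^ 2)) *
          ∫ t : ℝ, f t * Real.exp (-(x - t) ^ 2 / (2 * σ ^ 2))) x|
      ≤ 2 / σ ^ 2 := by
  intro x
  set b : ℝ := (2 * σ ^ 2)⁻¹ with hb_def
  have hb : 0 < b := by positivity
  have hfC (t : ℝ) : |f t| ≤ 1 := abs_le.2 ⟨by linarith [(hf01 t).1], (hf01 t).2⟩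
  have hkernel (y : ℝ) : -y ^ 2 / (2 * σ ^ 2) = -b * y ^ 2 := by rw [hb_def]; ring
  have hnorm : 1 / √(2 * π * σ ^ 2) = (∫ y, exp (-b * y ^ 2))⁻¹ := by
    rw [integral_gaussian, hb_def, div_inv_eq_mul, one_div]
    ring_nf
  have hZ : 0 < ∫ y, exp (-b * y ^ 2) := by rw [integral_gaussian]; positivity
  simp_rw [hkernel, hnorm]
  have h1 := hasDerivAt_integral_mul_comp_sub_of_abs_le hf.aestronglyMeasurable hfC
    (hasDerivAt_exp_neg_mul_sq b) (integrable_exp_neg_mul_sq hb) (by fun_prop) hb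
    (by positivity) (abs_deriv_exp_neg_mul_sq_le hb.le)
  have h2 := hasDerivAt_integral_mul_comp_sub_of_abs_le hf.aestronglyMeasurable hfC
    (fun y => (hasDerivAt_mul_exp_neg_mul_sq b y).const_mul (-2 * b))
    ((integrable_mul_exp_neg_mul_sq hb).const_mul _) (by fun_prop) hb
    (by positivity) (abs_deriv_two_exp_neg_mul_sq_le_one_add_sq hb.le)
  rw [iteratedDeriv_two_eq_of_hasDerivAt (fun x => (h1 x).const_mul _)
    (fun x => (h2 x).const_mul _), abs_mul, abs_of_pos (inv_pos.2 hZ)]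
  calc _ ≤ (∫ y, exp (-b * y ^ 2))⁻¹ *
        (1 * ∫ y, |-2 * b * ((1 - 2 * b * y ^ 2) * exp (-b * y ^ 2))|) := by
        gcongr
        exact abs_integral_mul_comp_sub_le hfC (integrable_deriv_two_exp_neg_mul_sq hb) x
    _ ≤ (∫ y, exp (-b * y ^ 2))⁻¹ * (4 * b * ∫ y, exp (-b * y ^ 2)) := by
        rw [one_mul]
        gcongr
        exact integral_abs_deriv_two_exp_neg_mul_sq_le hb
    _ = 2 / σ ^ 2 := by
        rw [mul_left_comm, inv_mul_cancel₀ hZ.ne', mul_one, hb_def]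
        field_simp
        ring
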